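/- Let Q, R, S, T be Hermitian operators squaring to the identity, with Q, R acting on H_A and S, T on H_B, and let C = Q⊗S + R⊗S + R⊗T − Q⊗T. Then for any unit vector ψ in H_A ⊗ H_B, |⟨ψ, C ψ⟩| ≤ 2√2 (the Tsirelson bound). -/

import Mathlib

/-!
The four observables embed into the algebra of operators on `H_A ⊗ H_B` as `R ⊗ 1`, `Q ⊗ 1`,
`1 ⊗ S`, `1 ⊗ T`: self-adjoint involutions, each of the first pair commuting with each of the
second, i.e. a CHSH tuple, whose CHSH combination is `C`. Tsirelson's inequality in ordered
⋆-algebras (Mathlib's `tsirelson_inequality`, a sum-of-squares certificate) gives `C ≤ 2√2` in the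
Loewner order, and applied to the tuple with the first pair negated, `-C ≤ 2√2`. Evaluating both
on the unit vector `ψ` bounds `|⟨ψ, Cψ⟩|` by `2√2`.
-/

open Matrix Kronecker
open scoped MatrixOrder ComplexOrder

namespace RCLike

variable {𝕜 : Type*} [RCLike 𝕜]

theorem norm_le_of_le_of_neg_le {z : 𝕜} {c : ℝ} (hle : z ≤ c) (hneg : -z ≤ c) : ‖z‖ ≤ c := by
  -- in `ComplexOrder`, `z ≤ c` with `c` real forces `z` to be real
  rw [le_iff_re_im] at hle hneg
  simp only [ofReal_re, ofReal_im, map_neg, neg_eq_zero] at hle hneg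
  rw [← re_add_im z, hle.2, ofReal_zero, zero_mul, add_zero, norm_ofReal]
  exact abs_le.mpr ⟨by linarith, hle.1⟩

end RCLike

namespace IsCHSHTuple

variable {R : Type*} [Ring R] [StarRing R] {A₀ A₁ B₀ B₁ : R}

theorem neg_left (h : IsCHSHTuple A₀ A₁ B₀ B₁) : IsCHSHTuple (-A₀) (-A₁) B₀ B₁ where
  A₀_inv := by rw [neg_sq, h.A₀_inv]
  A₁_inv := by rw [neg_sq, h.A₁_inv]
  B₀_inv := h.B₀_inv
  B₁_inv := h.B₁_inv
  A₀_sa := by rw [star_neg, h.A₀_sa]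
  A₁_sa := by rw [star_neg, h.A₁_sa]
  B₀_sa := h.B₀_sa
  B₁_sa := h.B₁_sa
  A₀B₀_commutes := by rw [neg_mul, mul_neg, h.A₀B₀_commutes]
  A₀B₁_commutes := by rw [neg_mul, mul_neg, h.A₀B₁_commutes]
  A₁B₀_commutes := by rw [neg_mul, mul_neg, h.A₁B₀_commutes]
  A₁B₁_commutes := by rw [neg_mul, mul_neg, h.A₁B₁_commutes]

end IsCHSHTuple

namespace Matrix

section Kronecker

variable {l n R : Type*} [Fintype l] [Fintype n] [DecidableEq l] [DecidableEq n] [CommRing R]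

theorem kronecker_one_mul_one_kronecker (A : Matrix l l R) (B : Matrix n n R) :
    (A ⊗ₖ 1) * (1 ⊗ₖ B) = A ⊗ₖ B := by
  rw [← mul_kronecker_mul, mul_one, one_mul]

theorem one_kronecker_mul_kronecker_one (A : Matrix l l R) (B : Matrix n n R) :
    (1 ⊗ₖ B) * (A ⊗ₖ 1) = A ⊗ₖ B := by
  rw [← mul_kronecker_mul, mul_one, one_mul]

theorem isCHSHTuple_kronecker [StarRing R] {A₀ A₁ : Matrix l l R} {B₀ B₁ : Matrix n n R}
    (hA₀ : A₀.IsHermitian) (hA₁ : A₁.IsHermitian) (hB₀ : B₀.IsHermitian) (hB₁ : B₁.IsHermitian)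
    (hA₀2 : A₀ * A₀ = 1) (hA₁2 : A₁ * A₁ = 1) (hB₀2 : B₀ * B₀ = 1) (hB₁2 : B₁ * B₁ = 1) :
    IsCHSHTuple (A₀ ⊗ₖ (1 : Matrix n n R)) (A₁ ⊗ₖ 1) ((1 : Matrix l l R) ⊗ₖ B₀) (1 ⊗ₖ B₁) where
  A₀_inv := by rw [sq, ← mul_kronecker_mul, hA₀2, mul_one, one_kronecker_one]
  A₁_inv := by rw [sq, ← mul_kronecker_mul, hA₁2, mul_one, one_kronecker_one]
  B₀_inv := by rw [sq, ← mul_kronecker_mul, hB₀2, mul_one, one_kronecker_one]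
  B₁_inv := by rw [sq, ← mul_kronecker_mul, hB₁2, mul_one, one_kronecker_one]
  A₀_sa := by rw [star_eq_conjTranspose, conjTranspose_kronecker, hA₀.eq, conjTranspose_one]
  A₁_sa := by rw [star_eq_conjTranspose, conjTranspose_kronecker, hA₁.eq, conjTranspose_one]
  B₀_sa := by rw [star_eq_conjTranspose, conjTranspose_kronecker, hB₀.eq, conjTranspose_one]
  B₁_sa := by rw [star_eq_conjTranspose, conjTranspose_kronecker, hB₁.eq, conjTranspose_one]
  A₀B₀_commutes := by rw [kronecker_one_mul_one_kronecker, one_kronecker_mul_kronecker_one]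
  A₀B₁_commutes := by rw [kronecker_one_mul_one_kronecker, one_kronecker_mul_kronecker_one]
  A₁B₀_commutes := by rw [kronecker_one_mul_one_kronecker, one_kronecker_mul_kronecker_one]
  A₁B₁_commutes := by rw [kronecker_one_mul_one_kronecker, one_kronecker_mul_kronecker_one]

end Kronecker

section LoewnerOrder

variable {𝕜 n : Type*} [RCLike 𝕜] [Fintype n] [DecidableEq n]

theorem dotProduct_mulVec_le_of_le_smul_one {A : Matrix n n 𝕜} {c : ℝ} (hA : A ≤ c • 1)
    {x : n → 𝕜} (hx : star x ⬝ᵥ x = 1) : star x ⬝ᵥ (A *ᵥ x) ≤ c := by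
  have hform := (le_iff.mp hA).dotProduct_mulVec_nonneg x
  rw [sub_mulVec, dotProduct_sub, smul_mulVec, one_mulVec, dotProduct_smul, hx,
    sub_nonneg] at hform
  simpa [RCLike.real_smul_eq_coe_mul] using hform

theorem norm_dotProduct_mulVec_le_of_neg_le_of_le {A : Matrix n n 𝕜} {c : ℝ}
    (hlow : -(c • 1) ≤ A) (hup : A ≤ c • 1) {x : n → 𝕜} (hx : star x ⬝ᵥ x = 1) :
    ‖star x ⬝ᵥ (A *ᵥ x)‖ ≤ c := by
  refine RCLike.norm_le_of_le_of_neg_le (dotProduct_mulVec_le_of_le_smul_one hup hx) ?_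
  rw [← dotProduct_neg, ← neg_mulVec]
  exact dotProduct_mulVec_le_of_le_smul_one (neg_le.mp hlow) hx

end LoewnerOrder

end Matrix

/-- The Tsirelson bound: for Hermitian Q,R,S,T squaring to the identity and
C = Q⊗S + R⊗S + R⊗T − Q⊗T, every unit vector ψ satisfies |⟨ψ, Cψ⟩| ≤ 2√2. -/
theorem tsirelson_bound {m n : ℕ}
    (Q R : Matrix (Fin m) (Fin m) ℂ) (S T : Matrix (Fin n) (Fin n) ℂ)
    (hQ : Q.IsHermitian) (hR : R.IsHermitian) (hS : S.IsHermitian) (hT : T.IsHermitian)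
    (hQ2 : Q * Q = 1) (hR2 : R * R = 1) (hS2 : S * S = 1) (hT2 : T * T = 1)
    (ψ : Fin m × Fin n → ℂ) (hψ : star ψ ⬝ᵥ ψ = 1) :
    ‖star ψ ⬝ᵥ ((Q ⊗ₖ S + R ⊗ₖ S + R ⊗ₖ T - Q ⊗ₖ T) *ᵥ ψ)‖ ≤
      2 * Real.sqrt 2 := by
  have hCHSH := isCHSHTuple_kronecker hR hQ hS hT hR2 hQ2 hS2 hT2
  have hupper := tsirelson_inequality _ _ _ _ hCHSH
  have hlower := tsirelson_inequality _ _ _ _ hCHSH.neg_left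
  simp only [neg_mul, kronecker_one_mul_one_kronecker] at hupper hlower
  calc _ ≤ √2 ^ 3 := by
        refine norm_dotProduct_mulVec_le_of_neg_le_of_le (neg_le.mpr ?_) ?_ hψ
        · convert hlower using 1; abel
        · convert hupper using 1; abel
    _ = 2 * √2 := by rw [pow_succ, Real.sq_sqrt zero_le_two, mul_comm]
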